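/- arXiv:2307.00297 — 3 statements merged into one kernel-verified Lean document; each statement's English description precedes it below -/
import Mathlib

section
/- Let F be a subfield of the algebraic numbers such that the set of algebraic integers in F has Northcott number C with respect to the house. Then the set X of algebraic integers of degree at most d over F satisfies N_house(X) ≥ C^(1/d)/2^d. -/
noncomputable section

/-- The field of algebraic numbers. -/
abbrev Qbar := AlgebraicClosure ℚ

/-- The Mahler measure of an integer polynomial: absolute value of the leading
coefficient times the product of `max 1 |root|` over its complex roots. -/
noncomputable def mahlerMeasure (f : Polynomial ℤ) : ℝ :=
  ‖(f.map (Int.castRingHom ℂ)).leadingCoeff‖ *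
    (((f.map (Int.castRingHom ℂ)).roots.map (fun z => max 1 ‖z‖)).prod)

/-- The absolute logarithmic Weil height of an algebraic number, defined as
`(1/d) log M(f)` where `f` is the primitive integer minimal polynomial. -/
noncomputable def weilHeight (x : Qbar) : ℝ :=
  (((minpoly ℚ x).natDegree : ℝ))⁻¹ *
    Real.log (mahlerMeasure ((IsLocalization.integerNormalization (nonZeroDivisors ℤ)
      (minpoly ℚ x)).primPart))

/-- The Northcott number of a subset `S ⊆ Q̄` with respect to `f`. -/
noncomputable def northcott (f : Qbar → ℝ) (S : Set Qbar) : EReal :=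
  sInf ((fun r : ℝ => (r : EReal)) '' {r : ℝ | 0 ≤ r ∧ {x | x ∈ S ∧ f x < r}.Infinite})

/-- The degree of an algebraic number over ℚ. -/
noncomputable def degQ (x : Qbar) : ℕ := (minpoly ℚ x).natDegree

/-- The house of an algebraic number: the maximum modulus of its conjugates. -/
noncomputable def house (x : Qbar) : ℝ :=
  ((((minpoly ℚ x).aroots ℂ)).map (fun z : ℂ => ‖z‖)).toList.foldr max 0

/-! A nonzero algebraic integer has house at least `1`, because its norm is a nonzero rational
integer; so if infinitely many `x` in the set have house `< r`, then `r > 1`. For such `x`, of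
degree `n ≤ d` over `F`, every conjugate of a coefficient of the minimal polynomial of `x` over
`F` is an elementary symmetric function of conjugates of `x`, hence has modulus at most
`binom(n, i) · max(1, ⌈x⌉)ⁿ ≤ (2 max(1, ⌈x⌉))ⁿ < (2r)^d`. These coefficients are integers of
`F`, and only finitely many `x` share a minimal polynomial, so there are infinitely many
integers of `F` of house `< (2r)^d`. Thus `C ≤ (2r)^d`, that is `C^(1/d) / 2^d ≤ r`. -/

open Polynomial

-- `Algebra ℚ Qbar` is found as `DivisionRing.toRatAlgebra`, which Mathlib's instance
-- `AlgebraicClosure.isAlgebraic` does not match.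
instance : Algebra.IsAlgebraic ℚ Qbar := AlgebraicClosure.isAlgebraic ℚ

lemma house_nonneg (x : Qbar) : 0 ≤ house x := by
  unfold house
  induction ((minpoly ℚ x).aroots ℂ).map (fun z : ℂ => ‖z‖) |>.toList <;> simp [*]

lemma norm_le_house {x : Qbar} {z : ℂ} (hz : z ∈ (minpoly ℚ x).aroots ℂ) :
    ‖z‖ ≤ house x :=
  List.le_max_of_le' 0 (Multiset.mem_toList.mpr (Multiset.mem_map_of_mem _ hz)) le_rfl

lemma house_le {x : Qbar} {B : ℝ} (hB : 0 ≤ B)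
    (h : ∀ z ∈ (minpoly ℚ x).aroots ℂ, ‖z‖ ≤ B) : house x ≤ B := by
  have foldr_max_le (l : List ℝ) (hl : ∀ a ∈ l, a ≤ B) : l.foldr max 0 ≤ B := by
    induction l <;> simp_all
  refine foldr_max_le _ fun a ha => ?_
  obtain ⟨z, hz, rfl⟩ := Multiset.mem_map.mp (Multiset.mem_toList.mp ha)
  exact h z hz

lemma algHom_apply_mem_aroots (ψ : Qbar →ₐ[ℚ] ℂ) (x : Qbar) :
    ψ x ∈ (minpoly ℚ x).aroots ℂ :=
  mem_aroots.mpr ⟨minpoly.ne_zero (Algebra.IsIntegral.isIntegral x), by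
    rw [aeval_algHom_apply, minpoly.aeval, map_zero]⟩

lemma house_le_of_forall_algHom {x : Qbar} {B : ℝ} (hB : 0 ≤ B)
    (h : ∀ ψ : Qbar →ₐ[ℚ] ℂ, ‖ψ x‖ ≤ B) : house x ≤ B := by
  refine house_le hB fun z hz => ?_
  obtain ⟨ψ, rfl⟩ : z ∈ Set.range fun ψ : Qbar →ₐ[ℚ] ℂ => ψ x := by
    rw [Algebra.IsAlgebraic.range_eval_eq_rootSet_minpoly]
    exact (mem_rootSet_of_ne (minpoly.ne_zero (Algebra.IsIntegral.isIntegral x))).mpr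
      (mem_aroots.mp hz).2
  exact h ψ

lemma one_le_prod_norm_aroots {p : ℤ[X]} (hp : p.Monic) (h0 : p.coeff 0 ≠ 0) :
    1 ≤ ((p.aroots ℂ).map (‖·‖)).prod := by
  have hsplit : (p.map (algebraMap ℤ ℂ)).Splits := IsAlgClosed.splits _
  calc (1 : ℝ) ≤ |(p.coeff 0 : ℝ)| := by exact_mod_cast Int.one_le_abs h0
    _ = ‖(p.map (algebraMap ℤ ℂ)).coeff 0‖ := by simp
    _ = ((p.aroots ℂ).map (‖·‖)).prod := by
      rw [hsplit.coeff_zero_eq_prod_roots_of_monic (hp.map _), norm_mul, norm_pow, norm_neg,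
        norm_one, one_pow, one_mul, aroots_def]
      exact map_multiset_prod (normHom : ℂ →*₀ ℝ) _

lemma one_le_house {x : Qbar} (hx : IsIntegral ℤ x) (hx0 : x ≠ 0) : 1 ≤ house x := by
  have hQ := minpoly.isIntegrallyClosed_eq_field_fractions' ℚ hx
  have h0 : (minpoly ℤ x).coeff 0 ≠ 0 := by
    have := minpoly.coeff_zero_ne_zero (Algebra.IsIntegral.isIntegral (R := ℚ) x) hx0
    rw [hQ, coeff_map] at this
    exact fun h => this (by simp [h])
  have hdeg : Multiset.card ((minpoly ℚ x).aroots ℂ) ≠ 0 :=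
    (Multiset.card_pos_iff_exists_mem.mpr
      ⟨_, algHom_apply_mem_aroots (IsAlgClosed.lift : Qbar →ₐ[ℚ] ℂ) x⟩).ne'
  rw [← one_le_pow_iff_of_nonneg (house_nonneg x) hdeg]
  calc 1 ≤ (((minpoly ℚ x).aroots ℂ).map (‖·‖)).prod := by
        rw [hQ, aroots_map]
        exact one_le_prod_norm_aroots (minpoly.monic hx) h0
    _ ≤ house x ^ Multiset.card ((minpoly ℚ x).aroots ℂ) :=
        Multiset.prod_map_le_pow_card (f := (normHom : ℂ →*₀ ℝ)) (fun z _ => norm_nonneg z)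
          fun _ hz => norm_le_house hz

lemma isIntegral_coeff_minpoly {R K A : Type*} [CommRing R] [Field K] [CommRing A]
    [Algebra R K] [Algebra K A] [Algebra R A] [IsScalarTower R K A] {x : A}
    (hx : IsIntegral R x) (i : ℕ) : IsIntegral R ((minpoly K x).coeff i) :=
  isIntegral_coeff_of_dvd (minpoly R x) (minpoly K x) (minpoly.monic hx)
    (minpoly.monic hx.tower_top) (minpoly.dvd_map_of_isScalarTower R K x) i

section CoefficientBound

variable {F : Type*} [Field F] [Algebra ℚ F] [Algebra F Qbar] [IsScalarTower ℚ F Qbar]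

lemma norm_le_house_of_mem_roots_map_minpoly (ρ : F →+* ℂ) {x : Qbar} {w : ℂ}
    (hw : w ∈ ((minpoly F x).map ρ).roots) : ‖w‖ ≤ house x := by
  have hdvd : (minpoly F x).map ρ ∣ (minpoly ℚ x).map (algebraMap ℚ ℂ) := by
    simpa only [Polynomial.map_map, Subsingleton.elim (ρ.comp (algebraMap ℚ F)) (algebraMap ℚ ℂ)]
      using Polynomial.map_dvd ρ (minpoly.dvd_map_of_isScalarTower ℚ F x)
  refine norm_le_house ?_
  rw [aroots_def]
  exact Multiset.mem_of_le (roots.le_of_dvd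
    ((minpoly.monic (Algebra.IsIntegral.isIntegral x)).map _).ne_zero hdvd) hw

lemma house_coeff_minpoly_le (x : Qbar) (i : ℕ) :
    house (algebraMap F Qbar ((minpoly F x).coeff i)) ≤
      (2 * max 1 (house x)) ^ (minpoly F x).natDegree := by
  set n := (minpoly F x).natDegree
  refine house_le_of_forall_algHom (by positivity) fun ψ => ?_
  let ρ : F →+* ℂ := ψ.toRingHom.comp (algebraMap F Qbar)
  have hcoeff : ψ (algebraMap F Qbar ((minpoly F x).coeff i)) =
      ((minpoly F x).map ρ).coeff i := by
    rw [coeff_map]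
    rfl
  calc ‖ψ (algebraMap F Qbar ((minpoly F x).coeff i))‖
      ≤ house x ^ (n - i) * n.choose i := by
        rw [hcoeff]
        exact coeff_le_of_roots_le i
          (minpoly.monic (Algebra.IsIntegral.isIntegral (R := ℚ) x).tower_top)
          (IsAlgClosed.splits _) fun w hw => norm_le_house_of_mem_roots_map_minpoly ρ hw
    _ ≤ max 1 (house x) ^ n * 2 ^ n := by
        gcongr
        · exact (pow_le_pow_left₀ (house_nonneg x) (le_max_right 1 _) _).trans
            (pow_le_pow_right₀ (le_max_left _ _) (n.sub_le i))
        · exact_mod_cast Nat.choose_le_two_pow n i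
    _ = (2 * max 1 (house x)) ^ n := by ring

end CoefficientBound

lemma one_lt_of_infinite_setOf_house_lt {r : ℝ}
    (h : {x : Qbar | IsIntegral ℤ x ∧ house x < r}.Infinite) : 1 < r := by
  obtain ⟨x, ⟨hx, hxr⟩, hx0⟩ := h.exists_notMem_finite (Set.finite_singleton 0)
  exact (one_le_house hx hx0).trans_lt hxr

lemma infinite_setOf_house_lt_of_natDegree_le (F : IntermediateField ℚ Qbar) {d : ℕ} {r : ℝ}
    (hr : 1 < r)
    (h : {x : Qbar | (IsIntegral ℤ x ∧ (minpoly F x).natDegree ≤ d) ∧ house x < r}.Infinite) :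
    {y : Qbar | (y ∈ F ∧ IsIntegral ℤ y) ∧ house y < (2 * r) ^ d}.Infinite := by
  classical
  intro hfin
  set U : Set F :=
    {c | IsIntegral ℤ (algebraMap F Qbar c) ∧ house (algebraMap F Qbar c) < (2 * r) ^ d}
  have hU : U.Finite :=
    (hfin.preimage Subtype.val_injective.injOn).subset fun c hc => ⟨⟨c.2, hc.1⟩, hc.2⟩
  refine h ((bUnion_roots_finite (algebraMap F Qbar) d hU).subset ?_)
  rintro x ⟨⟨hx, hdeg⟩, hxr⟩
  have hxF : IsIntegral F x := hx.tower_top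
  have hn : 0 < (minpoly F x).natDegree := minpoly.natDegree_pos hxF
  refine Set.mem_iUnion₂.mpr ⟨minpoly F x, ⟨hdeg, fun i => ⟨?_, ?_⟩⟩, ?_⟩
  · exact (isIntegral_coeff_minpoly hx i).algebraMap
  · calc house (algebraMap F Qbar ((minpoly F x).coeff i))
        ≤ (2 * max 1 (house x)) ^ (minpoly F x).natDegree := house_coeff_minpoly_le x i
      _ < (2 * r) ^ (minpoly F x).natDegree := by
        gcongr
        exact max_lt hr hxr
      _ ≤ (2 * r) ^ d := pow_le_pow_right₀ (by linarith) hdeg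
  · rw [Finset.mem_coe, Multiset.mem_toFinset, mem_roots ((minpoly.monic hxF).map _).ne_zero,
      IsRoot, eval_map_algebraMap, minpoly.aeval]

lemma le_northcott {f : Qbar → ℝ} {S : Set Qbar} {t : EReal}
    (h : ∀ r : ℝ, 0 ≤ r → {x | x ∈ S ∧ f x < r}.Infinite → t ≤ r) : t ≤ northcott f S :=
  le_sInf <| by
    rintro _ ⟨r, ⟨hr0, hr⟩, rfl⟩
    exact h r hr0 hr

lemma northcott_le {f : Qbar → ℝ} {S : Set Qbar} {r : ℝ} (hr0 : 0 ≤ r)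
    (h : {x | x ∈ S ∧ f x < r}.Infinite) : northcott f S ≤ r :=
  sInf_le ⟨r, ⟨hr0, h⟩, rfl⟩

lemma rpow_one_div_div_two_pow_le {C r : ℝ} {d : ℕ} (hd : d ≠ 0) (hC0 : 0 ≤ C) (hr : 0 ≤ r)
    (hC : C ≤ (2 * r) ^ d) : C ^ (1 / (d : ℝ)) / 2 ^ d ≤ r := by
  have h2d : (2 : ℝ) ≤ 2 ^ d := le_self_pow₀ one_le_two hd
  calc C ^ (1 / (d : ℝ)) / 2 ^ d ≤ ((2 * r) ^ d) ^ (1 / (d : ℝ)) / 2 ^ d := by gcongr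
    _ = 2 * r / 2 ^ d := by rw [one_div, Real.pow_rpow_inv_natCast (by positivity) hd]
    _ ≤ r := by
      rw [div_le_iff₀ (by positivity)]
      nlinarith

/-- House version of the Northcott inequality. -/
theorem northcott_inequality_house (F : IntermediateField ℚ Qbar) (d : ℕ) (hd : 1 ≤ d)
    (C : ℝ) (hC0 : 0 ≤ C)
    (hC : northcott house {x : Qbar | x ∈ F ∧ IsIntegral ℤ x} = (C : EReal)) :
    ((C ^ (1 / (d : ℝ)) / 2 ^ d : ℝ) : EReal) ≤
      northcott house
        {x : Qbar | IsIntegral ℤ x ∧ ∃ p : Polynomial F, p ≠ 0 ∧ p.natDegree ≤ d ∧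
          Polynomial.aeval x p = 0} := by
  refine le_northcott fun r hr0 hr => ?_
  have hX : {x | (IsIntegral ℤ x ∧ ∃ p : F[X], p ≠ 0 ∧ p.natDegree ≤ d ∧ aeval x p = 0) ∧
      house x < r} ⊆ {x | (IsIntegral ℤ x ∧ (minpoly F x).natDegree ≤ d) ∧ house x < r} := by
    rintro x ⟨⟨hx, p, hp0, hpd, hpx⟩, hxr⟩
    exact ⟨⟨hx, (natDegree_le_natDegree (minpoly.degree_le_of_ne_zero F x hp0 hpx)).trans hpd⟩,
      hxr⟩
  have hr1 : 1 < r :=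
    one_lt_of_infinite_setOf_house_lt <| (hr.mono hX).mono fun x hx => ⟨hx.1.1, hx.2⟩
  have hCr : (C : EReal) ≤ ((2 * r) ^ d : ℝ) := by
    rw [← hC]
    exact northcott_le (by positivity) (infinite_setOf_house_lt_of_natDegree_le F hr1 (hr.mono hX))
  exact EReal.coe_le_coe_iff.mpr
    (rpow_one_div_div_two_pow_le (by omega) hC0 hr0 (EReal.coe_le_coe_iff.mp hCr))

end
end

section
/- The field of totally real algebraic numbers ℚ^tr has Northcott number at most log 2 with respect to the logarithmic Weil height. -/
noncomputable section

/-- The field of totally real algebraic numbers, as an intermediate field of `Q̄`. -/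
def Qtr : IntermediateField ℚ Qbar :=
  Subfield.toIntermediateField
    { carrier := {x : Qbar | ∀ σ : Qbar →+* ℂ, ∃ r : ℝ, σ x = (r : ℂ)}
      mul_mem' := by
        intro a b ha hb σ
        obtain ⟨r, hr⟩ := ha σ; obtain ⟨s, hs⟩ := hb σ
        exact ⟨r * s, by rw [map_mul, hr, hs]; push_cast; ring⟩
      one_mem' := fun σ => ⟨1, by simp⟩
      add_mem' := by
        intro a b ha hb σ
        obtain ⟨r, hr⟩ := ha σ; obtain ⟨s, hs⟩ := hb σ
        exact ⟨r + s, by rw [map_add, hr, hs]; push_cast; ring⟩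
      zero_mem' := fun σ => ⟨0, by simp⟩
      neg_mem' := by
        intro a ha σ
        obtain ⟨r, hr⟩ := ha σ
        exact ⟨-r, by rw [map_neg, hr]; push_cast; ring⟩
      inv_mem' := by
        intro a ha σ
        obtain ⟨r, hr⟩ := ha σ
        exact ⟨r⁻¹, by rw [map_inv₀, hr]; push_cast; ring⟩ }
    (by intro q σ; exact ⟨(q : ℝ), by simp [map_ratCast]⟩)

/-!
For a primitive `n`-th root of unity `ζ`, the algebraic integer `ζ + ζ⁻¹` is totally real and all
its conjugates have modulus at most `2`. Its monic minimal polynomial over `ℤ` therefore has Mahler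
measure at most `2 ^ d`, so its height is at most `log 2`. Since `ζ + ζ⁻¹` determines `ζ` up to
inversion, different `n` give different numbers, and infinitely many totally real numbers have
height at most `log 2`.
-/

open scoped Polynomial

open Polynomial in
lemma mahlerMeasure_C_mul (f : ℤ[X]) {r : ℤ} (hr : r ≠ 0) :
    mahlerMeasure (C r * f) = |r| * mahlerMeasure f := by
  have hr' : (r : ℂ) ≠ 0 := Int.cast_ne_zero.mpr hr
  rw [_root_.mahlerMeasure, _root_.mahlerMeasure, Polynomial.map_mul, map_C, eq_intCast,
    leadingCoeff_mul, leadingCoeff_C, roots_C_mul _ hr', norm_mul, Complex.norm_intCast,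
    Int.cast_abs, mul_assoc]

lemma mahlerMeasure_of_associated {f g : ℤ[X]} (h : Associated f g) :
    mahlerMeasure f = mahlerMeasure g := by
  obtain ⟨u, rfl⟩ := h
  obtain ⟨r, hr, hu⟩ := Polynomial.isUnit_iff.mp u.isUnit
  rw [← hu, mul_comm, mahlerMeasure_C_mul _ hr.ne_zero, Int.isUnit_iff_abs_eq.mp hr,
    Int.cast_one, one_mul]

lemma mahlerMeasure_pos {f : ℤ[X]} (hf : f ≠ 0) : 0 < mahlerMeasure f := by
  refine mul_pos ?_ (Multiset.prod_pos fun a ha => ?_)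
  · simpa [Polynomial.leadingCoeff_eq_zero] using
      (Polynomial.map_injective _ (RingHom.injective_int (Int.castRingHom ℂ))).ne hf
  · obtain ⟨z, -, rfl⟩ := Multiset.mem_map.mp ha
    exact zero_lt_one.trans_le (le_max_left _ _)

lemma mahlerMeasure_le_pow_of_monic {f : ℤ[X]} (hf : f.Monic) {B : ℝ} (hB : 1 ≤ B)
    (hroots : ∀ z ∈ f.aroots ℂ, ‖z‖ ≤ B) : mahlerMeasure f ≤ B ^ f.natDegree := by
  rw [Polynomial.aroots_def, algebraMap_int_eq] at hroots
  rw [mahlerMeasure, (hf.map _).leadingCoeff, norm_one, one_mul]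
  calc _ ≤ ((f.map (Int.castRingHom ℂ)).roots.map fun _ => B).prod :=
        Multiset.prod_map_le_prod_map₀ _ _ (fun _ _ => zero_le_one.trans (le_max_left _ _))
          fun z hz => max_le hB (hroots z hz)
    _ = B ^ Multiset.card (f.map (Int.castRingHom ℂ)).roots := by simp
    _ ≤ B ^ f.natDegree :=
        pow_le_pow_right₀ hB ((Polynomial.card_roots' _).trans Polynomial.natDegree_map_le)

open Polynomial IsLocalization in
lemma associated_primPart_integerNormalization_map {F : ℤ[X]} (hF : F.IsPrimitive) :
    Associated (integerNormalization (nonZeroDivisors ℤ) (F.map (algebraMap ℤ ℚ))).primPart F := by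
  obtain ⟨b, hb, hmap⟩ := integerNormalization_spec (nonZeroDivisors ℤ) (F.map (algebraMap ℤ ℚ))
  have hnorm : integerNormalization (nonZeroDivisors ℤ) (F.map (algebraMap ℤ ℚ)) = C b * F :=
    map_injective _ (algebraMap ℤ ℚ).injective_int <| by
      rw [hmap, Polynomial.map_mul, map_C, ← smul_eq_C_mul, algebraMap_smul]
  have hb0 : C b ≠ 0 := C_ne_zero.mpr (nonZeroDivisors.ne_zero hb)
  rw [hnorm, primPart_mul (mul_ne_zero hb0 hF.ne_zero), hF.primPart_eq]
  exact associated_unit_mul_left _ _ (isUnit_primPart_C b)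

lemma weilHeight_eq_of_isIntegral {x : Qbar} (hx : IsIntegral ℤ x) :
    weilHeight x =
      ((minpoly ℤ x).natDegree : ℝ)⁻¹ * Real.log (mahlerMeasure (minpoly ℤ x)) := by
  rw [weilHeight, minpoly.isIntegrallyClosed_eq_field_fractions' ℚ hx,
    mahlerMeasure_of_associated
      (associated_primPart_integerNormalization_map (minpoly.monic hx).isPrimitive),
    (minpoly.monic hx).natDegree_map]

lemma exists_ringHom_apply_eq_of_mem_aroots_minpoly {K : Type*} [Field K] [Algebra ℚ K]
    [Algebra.IsAlgebraic ℚ K] {x : K} (hx : IsIntegral ℤ x) {z : ℂ}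
    (hz : z ∈ (minpoly ℤ x).aroots ℂ) : ∃ σ : K →+* ℂ, σ x = z := by
  have hz' : z ∈ (minpoly ℚ x).rootSet ℂ := by
    rwa [minpoly.isIntegrallyClosed_eq_field_fractions' ℚ hx, Polynomial.rootSet_def,
      Polynomial.aroots_map, Finset.mem_coe, Multiset.mem_toFinset]
  obtain ⟨ψ, rfl⟩ := (Algebra.IsAlgebraic.range_eval_eq_rootSet_minpoly ℂ x).symm.subset hz'
  exact ⟨ψ, rfl⟩

/- Instance search finds `DivisionRing.toRatAlgebra` on `Qbar`, which agrees with the algebra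
structure of `AlgebraicClosure ℚ` only after unfolding. -/
instance Qbar.isAlgebraic : Algebra.IsAlgebraic ℚ Qbar :=
  AlgebraicClosure.isAlgebraic ℚ

lemma weilHeight_le_log_of_isIntegral {x : Qbar} (hx : IsIntegral ℤ x) {B : ℝ} (hB : 1 ≤ B)
    (hconj : ∀ σ : Qbar →+* ℂ, ‖σ x‖ ≤ B) : weilHeight x ≤ Real.log B := by
  have hd : 0 < ((minpoly ℤ x).natDegree : ℝ) := by exact_mod_cast minpoly.natDegree_pos hx
  have hM : mahlerMeasure (minpoly ℤ x) ≤ B ^ (minpoly ℤ x).natDegree :=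
    mahlerMeasure_le_pow_of_monic (minpoly.monic hx) hB fun z hz => by
      obtain ⟨σ, rfl⟩ := exists_ringHom_apply_eq_of_mem_aroots_minpoly hx hz
      exact hconj σ
  have hlog := Real.log_le_log (mahlerMeasure_pos (minpoly.ne_zero hx)) hM
  rw [Real.log_pow] at hlog
  rwa [weilHeight_eq_of_isIntegral hx, inv_mul_le_iff₀ hd]

lemma northcott_le_of_infinite {f : Qbar → ℝ} {S : Set Qbar} {c : ℝ} (hc : 0 ≤ c)
    (h : {x | x ∈ S ∧ f x ≤ c}.Infinite) : northcott f S ≤ c := by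
  refine le_of_forall_gt fun e he => ?_
  rw [northcott]
  obtain ⟨r, hcr, hre⟩ := EReal.lt_iff_exists_real_btwn.mp he
  have hcr : c < r := EReal.coe_lt_coe_iff.mp hcr
  have hinf : {x | x ∈ S ∧ f x < r}.Infinite := h.mono fun x hx => ⟨hx.1, hx.2.trans_lt hcr⟩
  exact lt_of_le_of_lt (sInf_le ⟨r, ⟨hc.trans hcr.le, hinf⟩, rfl⟩) hre

lemma mem_Qtr_iff {x : Qbar} : x ∈ Qtr ↔ ∀ σ : Qbar →+* ℂ, ∃ r : ℝ, σ x = r := Iff.rfl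

lemma eq_or_eq_inv_of_add_inv_eq_add_inv {K : Type*} [Field K] {a b : K} (ha : a ≠ 0)
    (hb : b ≠ 0) (h : a + a⁻¹ = b + b⁻¹) : b = a ∨ b = a⁻¹ := by
  have : (b - a) * (b - a⁻¹) = 0 := by
    calc (b - a) * (b - a⁻¹) = b * b - (a + a⁻¹) * b + a * a⁻¹ := by ring
      _ = b * b - (b + b⁻¹) * b + b * b⁻¹ := by rw [h, mul_inv_cancel₀ ha, mul_inv_cancel₀ hb]
      _ = 0 := by ring
  simpa only [mul_eq_zero, sub_eq_zero] using this

namespace IsPrimitiveRoot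

variable {K : Type*} [Field K]

lemma eq_of_add_inv_eq_add_inv {ζ η : K} {k l : ℕ} (hζ : IsPrimitiveRoot ζ k)
    (hη : IsPrimitiveRoot η l) (hk : k ≠ 0) (hl : l ≠ 0) (h : ζ + ζ⁻¹ = η + η⁻¹) : k = l := by
  rcases eq_or_eq_inv_of_add_inv_eq_add_inv (hζ.ne_zero hk) (hη.ne_zero hl) h with rfl | rfl
  · exact hζ.unique hη
  · exact hζ.inv.unique hη

lemma norm_ringHom_eq_one {ζ : K} {n : ℕ} (hζ : IsPrimitiveRoot ζ n) (hn : n ≠ 0)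
    (σ : K →+* ℂ) : ‖σ ζ‖ = 1 :=
  Complex.norm_eq_one_of_pow_eq_one (by rw [← map_pow, hζ.pow_eq_one, map_one]) hn

lemma add_inv_mem_Qtr {ζ : Qbar} {n : ℕ} (hζ : IsPrimitiveRoot ζ n) (hn : n ≠ 0) :
    ζ + ζ⁻¹ ∈ Qtr := by
  refine mem_Qtr_iff.mpr fun σ => ⟨2 * (σ ζ).re, ?_⟩
  rw [map_add, map_inv₀, Complex.inv_eq_conj (hζ.norm_ringHom_eq_one hn σ), Complex.add_conj]

lemma weilHeight_add_inv_le_log_two {ζ : Qbar} {n : ℕ} (hζ : IsPrimitiveRoot ζ n) (hn : n ≠ 0) :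
    weilHeight (ζ + ζ⁻¹) ≤ Real.log 2 := by
  refine weilHeight_le_log_of_isIntegral ((hζ.isIntegral hn.bot_lt).add
    (hζ.inv.isIntegral hn.bot_lt)) one_le_two fun σ => ?_
  calc ‖σ (ζ + ζ⁻¹)‖ ≤ ‖σ ζ‖ + ‖σ ζ⁻¹‖ := by rw [map_add]; exact norm_add_le _ _
    _ = 2 := by rw [hζ.norm_ringHom_eq_one hn, hζ.inv.norm_ringHom_eq_one hn]; norm_num

end IsPrimitiveRoot

/-- The Northcott number of the totally real algebraic numbers is at most `log 2`. -/
theorem northcott_Qtr_le_log_two :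
    northcott weilHeight (Qtr : Set Qbar) ≤ ((Real.log 2 : ℝ) : EReal) := by
  choose ζ hζ using fun n : ℕ => HasEnoughRootsOfUnity.exists_primitiveRoot Qbar (n + 1)
  refine northcott_le_of_infinite (Real.log_nonneg one_le_two) <|
    Set.infinite_of_injective_forall_mem (f := fun n => ζ n + (ζ n)⁻¹) (fun m n h => ?_)
      fun n => ⟨(hζ n).add_inv_mem_Qtr n.succ_ne_zero,
        (hζ n).weilHeight_add_inv_le_log_two n.succ_ne_zero⟩
  simpa using (hζ m).eq_of_add_inv_eq_add_inv (hζ n) m.succ_ne_zero n.succ_ne_zero h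

end
end

section
/- Let S be the set of CM j-invariants in Q̄. Assume the Brauer–Siegel asymptotics: [ℚ(x):ℚ] = Δ(x)^{1/2+o(1)} and h(x) ≤ π·Δ(x)^{1/2} + C₀ for all CM j-invariants x, where Δ(x) is the absolute discriminant of the CM order and C₀ is an absolute constant. Then for every γ < −1, the weighted height h_γ(x) = deg(x)^γ h(x) tends to 0 along any enumeration of S by increasing discriminant; in particular I(S) = sup{γ : N_{h_γ}(S) = 0} satisfies I(S) ≤ −1. -/
noncomputable section

/-!
Choose `s` with `1 / (2|γ|) < s < 1 / 2`, namely `s = (γ - 1) / (4γ)`. For CM points of large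
discriminant the Brauer–Siegel lower bound `deg x ≥ Δ^s` and the height bound
`h x ≤ π Δ^(1/2) + C₀` give `deg(x)^γ h(x) ≤ π Δ^(γs + 1/2) + |C₀| Δ^(γs)`, and both
exponents are negative, so the weighted height tends to `0` as `Δ → ∞`. Since only finitely
many points have bounded discriminant, every sublevel set `{h_γ < r}` with `r > 0` is infinite.
-/

open Filter Topology

theorem northcott_eq_zero_of_forall_pos_infinite {f : Qbar → ℝ} {S : Set Qbar}
    (h : ∀ r : ℝ, 0 < r → {x | x ∈ S ∧ f x < r}.Infinite) : northcott f S = 0 := by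
  refine le_antisymm (EReal.le_of_forall_lt_iff_le.mp fun r hr => ?_) ?_
  · have hr : (0 : ℝ) < r := mod_cast hr
    exact csInf_le (OrderBot.bddBelow _) ⟨r, ⟨hr.le, h r hr⟩, rfl⟩
  · refine le_sInf ?_
    rintro _ ⟨r, ⟨hr, -⟩, rfl⟩
    exact EReal.coe_nonneg.mpr hr

theorem Set.Infinite.sep_lt_of_exists_forall_lt {α : Type*} {S : Set α} (hS : S.Infinite)
    {Δ f : α → ℝ} (hΔ : ∀ T : ℝ, {x | x ∈ S ∧ Δ x ≤ T}.Finite) {r : ℝ}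
    (hf : ∃ T : ℝ, ∀ x ∈ S, T < Δ x → f x < r) : {x | x ∈ S ∧ f x < r}.Infinite := by
  obtain ⟨T, hT⟩ := hf
  refine (hS.sdiff (hΔ T)).mono fun x hx => ⟨hx.1, hT x hx.1 ?_⟩
  by_contra! hle
  exact hx.2 ⟨hx.1, hle⟩

theorem tendsto_mul_rpow_add_mul_rpow_atTop_nhds_zero (a b : ℝ) {p q : ℝ} (hp : p < 0)
    (hq : q < 0) : Tendsto (fun t : ℝ => a * t ^ p + b * t ^ q) atTop (𝓝 0) := by
  have hp' := tendsto_rpow_neg_atTop (neg_pos.mpr hp)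
  have hq' := tendsto_rpow_neg_atTop (neg_pos.mpr hq)
  simp only [neg_neg] at hp' hq'
  simpa using (hp'.const_mul a).add (hq'.const_mul b)

theorem rpow_mul_le_of_rpow_le {d h D a C γ s : ℝ} (hD : 0 < D) (ha : 0 ≤ a) (hγ : γ ≤ 0)
    (hd : D ^ s ≤ d) (hh : h ≤ a * D ^ (1 / 2 : ℝ) + C) :
    d ^ γ * h ≤ a * D ^ (γ * s + 1 / 2) + |C| * D ^ (γ * s) := by
  have hDs : 0 < D ^ s := Real.rpow_pos_of_pos hD s
  have hdγ : d ^ γ ≤ D ^ (γ * s) := by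
    calc d ^ γ ≤ (D ^ s) ^ γ := Real.rpow_le_rpow_of_nonpos hDs hd hγ
      _ = D ^ (γ * s) := by rw [← Real.rpow_mul hD.le, mul_comm]
  have hdγ_pos : 0 < d ^ γ := Real.rpow_pos_of_pos (hDs.trans_le hd) γ
  have hDγs : 0 < D ^ (γ * s) := Real.rpow_pos_of_pos hD _
  have hrhs : a * D ^ (γ * s + 1 / 2) + |C| * D ^ (γ * s) =
      D ^ (γ * s) * (a * D ^ (1 / 2 : ℝ) + |C|) := by
    rw [Real.rpow_add hD]; ring
  rw [hrhs]
  rcases lt_or_ge h 0 with hneg | hnonneg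
  · exact (mul_neg_of_pos_of_neg hdγ_pos hneg).le.trans (by positivity)
  · calc d ^ γ * h ≤ D ^ (γ * s) * h := mul_le_mul_of_nonneg_right hdγ hnonneg
      _ ≤ D ^ (γ * s) * (a * D ^ (1 / 2 : ℝ) + |C|) :=
        mul_le_mul_of_nonneg_left (hh.trans (by gcongr; exact le_abs_self C)) hDγs.le

theorem cm_points_weighted_northcott_general (S : Set Qbar) (Δ : Qbar → ℝ)
    (hS : S.Infinite)
    (hΔfin : ∀ T : ℝ, {x | x ∈ S ∧ Δ x ≤ T}.Finite)
    (hBS : ∀ ε : ℝ, 0 < ε → ∃ T : ℝ, ∀ x ∈ S, T ≤ Δ x →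
      Δ x ^ (1 / 2 - ε) ≤ (degQ x : ℝ) ∧ (degQ x : ℝ) ≤ Δ x ^ (1 / 2 + ε))
    (C₀ : ℝ) (hh : ∀ x ∈ S, weilHeight x ≤ Real.pi * Δ x ^ (1 / 2 : ℝ) + C₀)
    (γ : ℝ) (hγ : γ < -1) :
    northcott (fun x => (degQ x : ℝ) ^ γ * weilHeight x) S = 0 := by
  set s := (γ - 1) / (4 * γ)
  have hγs : γ * s = (γ - 1) / 4 := by
    simp only [s]; field_simp [(by linarith : γ ≠ 0)]
  have hε : 0 < 1 / 2 - s := sub_pos.mpr ((div_lt_iff_of_neg (by linarith)).mpr (by linarith))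
  obtain ⟨T₁, hT₁⟩ := hBS (1 / 2 - s) hε
  have hlim := tendsto_mul_rpow_add_mul_rpow_atTop_nhds_zero Real.pi |C₀|
    (p := γ * s + 1 / 2) (q := γ * s) (by linarith) (by linarith)
  refine northcott_eq_zero_of_forall_pos_infinite fun r hr =>
    hS.sep_lt_of_exists_forall_lt hΔfin ?_
  obtain ⟨T₂, hT₂⟩ := eventually_atTop.mp (hlim.eventually (gt_mem_nhds hr))
  refine ⟨max (max T₁ T₂) 1, fun x hx hxT => ?_⟩
  simp only [max_lt_iff] at hxT
  have hdeg := (hT₁ x hx hxT.1.1.le).1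
  rw [sub_sub_cancel] at hdeg
  exact (rpow_mul_le_of_rpow_le (by linarith) Real.pi_pos.le (by linarith) hdeg (hh x hx)).trans_lt
    (hT₂ _ hxT.1.2.le)

/-- Under the Brauer–Siegel asymptotics for CM points, for every `γ < -1` the
weighted Northcott number of the set of CM `j`-invariants is `0`; in particular
`I(S) ≤ -1`. -/
theorem cm_points_weighted_northcott (S : Set Qbar) (Δ : Qbar → ℝ)
    (hS : S.Infinite) (hΔ1 : ∀ x ∈ S, 1 ≤ Δ x)
    (hΔfin : ∀ T : ℝ, {x | x ∈ S ∧ Δ x ≤ T}.Finite)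
    (hBS : ∀ ε : ℝ, 0 < ε → ∃ T : ℝ, ∀ x ∈ S, T ≤ Δ x →
      Δ x ^ (1 / 2 - ε) ≤ (degQ x : ℝ) ∧ (degQ x : ℝ) ≤ Δ x ^ (1 / 2 + ε))
    (C₀ : ℝ) (hh : ∀ x ∈ S, weilHeight x ≤ Real.pi * Δ x ^ (1 / 2 : ℝ) + C₀)
    (γ : ℝ) (hγ : γ < -1) :
    northcott (fun x => (degQ x : ℝ) ^ γ * weilHeight x) S = 0 :=
  cm_points_weighted_northcott_general S Δ hS hΔfin hBS C₀ hh γ hγ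

end
end
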